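/- Let u be C² on [-L,L] × [0,b] with u even in the second variable about y = 0 (after extension), D_{n+1}u = 0 on the lateral boundary edge E × [0,b], and D_{n+1}u < 0 in the interior region int × (0,b]. Then the inward normal derivative D_η u on the lateral boundary satisfies: s ↦ D_η u(x, s) is nonincreasing in s on [0,b] for each fixed boundary point x. -/

import Mathlib

/-!
Fix `s` and put `g(x) = ∂ᵧu(x, s)`. It vanishes at the edges `x = ±L` and is negative
between them, so its one-sided difference quotients give `∂ₓ∂ᵧu(L, s) ≥ 0 ≥ ∂ₓ∂ᵧu(-L, s)`.
Since `u` is `C²` the mixed partials commute, so these are the signs of `∂ᵧ∂ₓu` on the two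
edges, i.e. of the `s`-derivatives of `∂ₓu(L, s)` and `∂ₓu(-L, s)`.
-/

open Set Filter Topology

theorem HasDerivAt.nonneg_of_eventually_nonpos_left {g : ℝ → ℝ} {g' a : ℝ}
    (hg : HasDerivAt g g' a) (ha : g a = 0) (hle : ∀ᶠ x in 𝓝[<] a, g x ≤ 0) :
    0 ≤ g' := by
  refine ge_of_tendsto (hasDerivAt_iff_tendsto_slope_left_right.mp hg).1 ?_
  filter_upwards [self_mem_nhdsWithin, hle] with x hx hgx
  rw [slope_def_field, ha, sub_zero]
  exact div_nonneg_of_nonpos hgx (sub_nonpos.2 (le_of_lt hx))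

theorem HasDerivAt.nonpos_of_eventually_nonpos_right {g : ℝ → ℝ} {g' a : ℝ}
    (hg : HasDerivAt g g' a) (ha : g a = 0) (hle : ∀ᶠ x in 𝓝[>] a, g x ≤ 0) :
    g' ≤ 0 := by
  refine le_of_tendsto (hasDerivAt_iff_tendsto_slope_left_right.mp hg).2 ?_
  filter_upwards [self_mem_nhdsWithin, hle] with x hx hgx
  rw [slope_def_field, ha, sub_zero]
  exact div_nonpos_of_nonpos_of_nonneg hgx (sub_nonneg.2 (le_of_lt hx))

theorem antitoneOn_Icc_of_hasDerivAt_nonpos {f f' : ℝ → ℝ} {a b : ℝ}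
    (hf : ∀ x, HasDerivAt f (f' x) x) (hf' : ∀ x ∈ Ioo a b, f' x ≤ 0) :
    AntitoneOn f (Icc a b) :=
  antitoneOn_of_hasDerivWithinAt_nonpos (convex_Icc a b)
    (fun x _ => (hf x).continuousAt.continuousWithinAt) (fun x _ => (hf x).hasDerivWithinAt)
    (by simpa only [interior_Icc] using hf')

section PartialDerivatives

variable {F : Type*} [NormedAddCommGroup F] [NormedSpace ℝ F] {u : ℝ × ℝ → F}

theorem HasFDerivAt.hasDerivAt_partial_fst {u' : ℝ × ℝ →L[ℝ] F} {x y : ℝ}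
    (h : HasFDerivAt u u' (x, y)) : HasDerivAt (fun t => u (t, y)) (u' (1, 0)) x :=
  h.comp_hasDerivAt x ((hasDerivAt_id x).prodMk (hasDerivAt_const x y))

theorem HasFDerivAt.hasDerivAt_partial_snd {u' : ℝ × ℝ →L[ℝ] F} {x y : ℝ}
    (h : HasFDerivAt u u' (x, y)) : HasDerivAt (fun t => u (x, t)) (u' (0, 1)) y :=
  h.comp_hasDerivAt y ((hasDerivAt_const y x).prodMk (hasDerivAt_id y))

theorem ContDiff.hasDerivAt_deriv_partial_snd (hu : ContDiff ℝ 2 u) (x y : ℝ) :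
    HasDerivAt (fun t => deriv (fun s => u (t, s)) y)
      (fderiv ℝ (fderiv ℝ u) (x, y) (1, 0) (0, 1)) x := by
  have hu' : Differentiable ℝ (fderiv ℝ u) :=
    (hu.fderiv_right (m := 1) le_rfl).differentiable one_ne_zero
  have hpartial : (fun t => deriv (fun s => u (t, s)) y) = fun t => fderiv ℝ u (t, y) (0, 1) :=
    funext fun t => (hu.differentiable two_ne_zero (t, y)).hasFDerivAt.hasDerivAt_partial_snd.deriv
  rw [hpartial]
  simpa using (hu' (x, y)).hasFDerivAt.hasDerivAt_partial_fst.clm_apply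
    (hasDerivAt_const x ((0, 1) : ℝ × ℝ))

theorem ContDiff.hasDerivAt_deriv_partial_fst (hu : ContDiff ℝ 2 u) (x y : ℝ) :
    HasDerivAt (fun s => deriv (fun t => u (t, s)) x)
      (fderiv ℝ (fderiv ℝ u) (x, y) (1, 0) (0, 1)) y := by
  have hu' : Differentiable ℝ (fderiv ℝ u) :=
    (hu.fderiv_right (m := 1) le_rfl).differentiable one_ne_zero
  have hpartial : (fun s => deriv (fun t => u (t, s)) x) = fun s => fderiv ℝ u (x, s) (1, 0) :=
    funext fun s => (hu.differentiable two_ne_zero (x, s)).hasFDerivAt.hasDerivAt_partial_fst.deriv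
  rw [hpartial, (hu.contDiffAt.isSymmSndFDerivAt (by simp)) (1, 0) (0, 1)]
  simpa using (hu' (x, y)).hasFDerivAt.hasDerivAt_partial_snd.clm_apply
    (hasDerivAt_const y ((1, 0) : ℝ × ℝ))

end PartialDerivatives

theorem boundary_slope_monotone_general (L b : ℝ) (hL : 0 < L)
    (u : ℝ × ℝ → ℝ) (hu : ContDiff ℝ 2 u)
    (hedge : ∀ s ∈ Set.Icc 0 b,
      deriv (fun t => u (L, t)) s = 0 ∧ deriv (fun t => u (-L, t)) s = 0)
    (hint : ∀ x ∈ Set.Ioo (-L) L, ∀ y ∈ Set.Ioc 0 b,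
      deriv (fun t => u (x, t)) y < 0) :
    AntitoneOn (fun s => -(deriv (fun t => u (t, s)) L)) (Set.Icc 0 b) ∧
    AntitoneOn (fun s => deriv (fun t => u (t, s)) (-L)) (Set.Icc 0 b) := by
  have hnonpos : ∀ s ∈ Ioo 0 b, ∀ x ∈ Ioo (-L) L, deriv (fun t => u (x, t)) s ≤ 0 :=
    fun s hs x hx => (hint x hx s (Ioo_subset_Ioc_self hs)).le
  constructor
  · refine antitoneOn_Icc_of_hasDerivAt_nonpos
      (fun s => (hu.hasDerivAt_deriv_partial_fst L s).neg) fun s hs => neg_nonpos.2 ?_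
    exact (hu.hasDerivAt_deriv_partial_snd L s).nonneg_of_eventually_nonpos_left
      (hedge s (Ioo_subset_Icc_self hs)).1
      (eventually_of_mem (Ioo_mem_nhdsLT (neg_lt_self hL)) (hnonpos s hs))
  · refine antitoneOn_Icc_of_hasDerivAt_nonpos (hu.hasDerivAt_deriv_partial_fst (-L)) fun s hs => ?_
    exact (hu.hasDerivAt_deriv_partial_snd (-L) s).nonpos_of_eventually_nonpos_right
      (hedge s (Ioo_subset_Icc_self hs)).2
      (eventually_of_mem (Ioo_mem_nhdsGT (neg_lt_self hL)) (hnonpos s hs))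

/-- Monotonicity of the boundary slope along the lateral edge.  Let `u` be
`C²` on `[-L,L] × [0,b]` (extended evenly about `y = 0`), with the last
partial derivative `∂u/∂y` vanishing on the lateral boundary edges
`{±L} × [0,b]` and strictly negative in the interior region
`(-L,L) × (0,b]`.  Then the inward normal derivative `D_η u` on the lateral
boundary (which is `-∂u/∂x` at `x = L` and `∂u/∂x` at `x = -L`) is
nonincreasing in `s ∈ [0,b]`. -/
theorem boundary_slope_monotone (L b : ℝ) (hL : 0 < L) (hb : 0 < b)
    (u : ℝ × ℝ → ℝ) (hu : ContDiff ℝ 2 u)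
    (heven : ∀ x y : ℝ, u (x, y) = u (x, -y))
    (hedge : ∀ s ∈ Set.Icc 0 b,
      deriv (fun t => u (L, t)) s = 0 ∧ deriv (fun t => u (-L, t)) s = 0)
    (hint : ∀ x ∈ Set.Ioo (-L) L, ∀ y ∈ Set.Ioc 0 b,
      deriv (fun t => u (x, t)) y < 0) :
    AntitoneOn (fun s => -(deriv (fun t => u (t, s)) L)) (Set.Icc 0 b) ∧
    AntitoneOn (fun s => deriv (fun t => u (t, s)) (-L)) (Set.Icc 0 b) :=
  boundary_slope_monotone_general L b hL u hu hedge hint
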